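/- arXiv:1809.08916 — 2 statements merged into one kernel-verified Lean document; each statement's English description precedes it below -/
import Mathlib

section
/- Suppose w : ℝ³ → ℂ³ satisfies the decay estimate ‖∇ × w(ξ)‖ ≤ C ‖ξ‖^{−2} M for all ‖ξ‖ ≥ R. Let B^{(m)} be a fixed bounded set contained in the unit ball, α^{(m)}, α^{(n)} > 0, and z^{(m)}, z^{(n)} ∈ ℝ³ with ‖z^{(m)} − z^{(n)}‖ ≥ d > 0 where (α^{(m)} + d)/α^{(n)} ≥ R and (d − α^{(m)})/α^{(n)} ≥ R. Then the L² norm over the scaled translated set α^{(m)}B^{(m)} + z^{(m)} of the rescaled curl ξ ↦ (∇×w)((α^{(m)}ξ + z^{(m)} − z^{(n)})/α^{(n)}) times the Jacobian factor satisfies: (∫_{α^{(m)}B^{(m)}+z^{(m)}} ‖(∇×w)((x − z^{(n)})/α^{(n)})‖² dx)^{1/2} ≤ C' (α^{(m)})^{3/2} (α^{(n)})² (d − α^{(m)})^{−2} M. -/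
open Real MeasureTheory

/-- Partial derivative in direction `j` of a complex-valued function on ℝ³. -/
noncomputable def pderiv3 (j : Fin 3) (f : (Fin 3 → ℝ) → ℂ) (x : Fin 3 → ℝ) : ℂ :=
  fderiv ℝ f x (Pi.single j 1)

/-- The curl of a vector field `F : ℝ³ → ℂ³`. -/
noncomputable def curl (F : (Fin 3 → ℝ) → (Fin 3 → ℂ)) (x : Fin 3 → ℝ) : Fin 3 → ℂ :=
  ![pderiv3 1 (fun y => F y 2) x - pderiv3 2 (fun y => F y 1) x,
    pderiv3 2 (fun y => F y 0) x - pderiv3 0 (fun y => F y 2) x,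
    pderiv3 0 (fun y => F y 1) x - pderiv3 1 (fun y => F y 0) x]

/-! Every point of `αm • Bm + zm` lies in the closed ball of radius `αm` about `zm`, hence at
distance at least `d - αm` from `zn`; after rescaling by `αn⁻¹` it lies outside the ball of
radius `(d - αm) / αn ≥ R`, where the decay hypothesis bounds the curl uniformly by
`CC M αn² / (d - αm)²`. The `L²` norm over the set is at most this bound times the square root of
its volume, which is at most `αm³` times the volume of the unit ball. -/

section

variable {E F : Type*} [NormedAddCommGroup E] [NormedAddCommGroup F]

lemma image_smul_add_subset_closedBall [NormedSpace ℝ E] {B : Set E}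
    (hB : B ⊆ Metric.closedBall 0 1) {a : ℝ} (ha : 0 ≤ a) (z : E) : (fun ξ => a • ξ + z) '' B ⊆ Metric.closedBall z a := by
  rintro _ ⟨ξ, hξ, rfl⟩
  have hξ1 : ‖ξ‖ ≤ 1 := mem_closedBall_zero_iff.mp (hB hξ)
  rw [Metric.mem_closedBall, dist_eq_norm, add_sub_cancel_right, norm_smul, Real.norm_of_nonneg ha]
  exact mul_le_of_le_one_right ha hξ1

lemma sub_le_norm_sub_of_mem_closedBall {x z z' : E} {a : ℝ} (hx : x ∈ Metric.closedBall z a) :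
    ‖z - z'‖ - a ≤ ‖x - z'‖ := by
  rw [Metric.mem_closedBall, dist_eq_norm, norm_sub_rev] at hx
  linarith [norm_sub_le_norm_sub_add_norm_sub z x z']

lemma norm_comp_rescale_le_of_decay [NormedSpace ℝ E] {f : E → F} {K R α ρ : ℝ} (hK : 0 ≤ K)
    (hf : ∀ ξ, R ≤ ‖ξ‖ → ‖f ξ‖ ≤ K / ‖ξ‖ ^ 2) (hα : 0 < α) (hρ : 0 < ρ) (hRρ : R ≤ ρ / α)
    {x z : E} (hx : ρ ≤ ‖x - z‖) : ‖f (α⁻¹ • (x - z))‖ ≤ K * α ^ 2 / ρ ^ 2 := by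
  have hnorm : ρ / α ≤ ‖α⁻¹ • (x - z)‖ := by
    rw [norm_smul, norm_inv, Real.norm_of_nonneg hα.le, inv_mul_eq_div]
    gcongr
  calc ‖f (α⁻¹ • (x - z))‖ ≤ K / ‖α⁻¹ • (x - z)‖ ^ 2 := hf _ (hRρ.trans hnorm)
    _ ≤ K / (ρ / α) ^ 2 := by gcongr
    _ = K * α ^ 2 / ρ ^ 2 := by rw [div_pow, div_div_eq_mul_div]

end

lemma setIntegral_norm_sq_le {X F : Type*} [MeasurableSpace X] [NormedAddCommGroup F]
    {μ : Measure X} {s : Set X} {f : X → F} {b : ℝ} (hs : μ s < ⊤) (hf : ∀ x ∈ s, ‖f x‖ ≤ b) :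
    ∫ x in s, ‖f x‖ ^ 2 ∂μ ≤ b ^ 2 * μ.real s := by
  refine (le_abs_self _).trans ?_
  rw [← Real.norm_eq_abs]
  refine norm_setIntegral_le_of_norm_le_const hs fun x hx => ?_
  rw [Real.norm_of_nonneg (by positivity)]
  exact pow_le_pow_left₀ (norm_nonneg _) (hf x hx) 2

lemma rpow_half_le_of_le_sq_mul_cube_mul {I b a V : ℝ} (hI : 0 ≤ I) (hb : 0 ≤ b) (ha : 0 ≤ a)
    (hV : 0 ≤ V) (h : I ≤ b ^ 2 * (a ^ 3 * V)) :
    I ^ (1 / 2 : ℝ) ≤ b * a ^ (3 / 2 : ℝ) * V ^ (1 / 2 : ℝ) := by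
  calc I ^ (1 / 2 : ℝ) ≤ (b ^ 2 * (a ^ 3 * V)) ^ (1 / 2 : ℝ) := by gcongr
    _ = b * a ^ (3 / 2 : ℝ) * V ^ (1 / 2 : ℝ) := by
      rw [Real.mul_rpow (by positivity) (by positivity), Real.mul_rpow (by positivity) hV,
        ← Real.sqrt_eq_rpow, Real.sqrt_sq hb, ← Real.rpow_natCast a 3, ← Real.rpow_mul ha]
      norm_num [mul_assoc]

/-- Scaling estimate: if `‖∇×w(ξ)‖ ≤ C M/‖ξ‖²` for `‖ξ‖ ≥ R`, `B⁽ᵐ⁾` is contained in the unit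
ball, `‖z⁽ᵐ⁾ − z⁽ⁿ⁾‖ ≥ d` with `(αₘ + d)/αₙ ≥ R` and `(d − αₘ)/αₙ ≥ R`, then the `L²` norm of
`x ↦ (∇×w)((x − z⁽ⁿ⁾)/αₙ)` over `αₘB⁽ᵐ⁾ + z⁽ᵐ⁾` is at most
`C' αₘ^{3/2} αₙ² (d − αₘ)^{−2} M`. -/
theorem stmt6 (R CC : ℝ) (hR : 0 < R) (hCC : 0 ≤ CC) :
    ∃ C' : ℝ, 0 < C' ∧
      ∀ (w : (Fin 3 → ℝ) → (Fin 3 → ℂ)) (M : ℝ), 0 ≤ M →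
        (∀ ξ : Fin 3 → ℝ, R ≤ ‖ξ‖ → ‖curl w ξ‖ ≤ CC * M / ‖ξ‖ ^ 2) →
        ∀ (Bm : Set (Fin 3 → ℝ)), MeasurableSet Bm → Bm ⊆ Metric.closedBall 0 1 →
        ∀ (αm αn d : ℝ) (zm zn : Fin 3 → ℝ),
          0 < αm → 0 < αn → 0 < d → d ≤ ‖zm - zn‖ →
          R ≤ (αm + d) / αn → R ≤ (d - αm) / αn →
          (∫ x in (fun ξ => αm • ξ + zm) '' Bm, ‖curl w (αn⁻¹ • (x - zn))‖ ^ 2) ^ ((1 : ℝ)/2)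
            ≤ C' * αm ^ ((3 : ℝ)/2) * αn ^ 2 / (d - αm) ^ 2 * M := by
  set V : ℝ := volume.real (Metric.closedBall (0 : Fin 3 → ℝ) 1)
  refine ⟨CC * V ^ (1 / 2 : ℝ) + 1, by positivity, ?_⟩
  intro w M hM hcurl Bm _ hBm αm αn d zm zn hαm hαn _ hdz _ hgapR
  have hgap : 0 < d - αm := (div_pos_iff_of_pos_right hαn).mp (hR.trans_le hgapR)
  have hs := image_smul_add_subset_closedBall hBm hαm.le zm
  have hcurl_le : ∀ x ∈ (fun ξ => αm • ξ + zm) '' Bm,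
      ‖curl w (αn⁻¹ • (x - zn))‖ ≤ CC * M * αn ^ 2 / (d - αm) ^ 2 := fun x hx =>
    norm_comp_rescale_le_of_decay (by positivity) hcurl hαn hgap hgapR
      ((sub_le_sub_right hdz _).trans (sub_le_norm_sub_of_mem_closedBall (hs hx)))
  have hvol : volume.real ((fun ξ => αm • ξ + zm) '' Bm) ≤ αm ^ 3 * V := by
    calc _ ≤ volume.real (Metric.closedBall zm αm) :=
          measureReal_mono hs measure_closedBall_lt_top.ne
      _ = αm ^ 3 * V := by
          rw [Measure.addHaar_real_closedBall' volume zm hαm.le, Module.finrank_fin_fun]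
  have hL2 := (setIntegral_norm_sq_le ((measure_mono hs).trans_lt measure_closedBall_lt_top)
    hcurl_le).trans (mul_le_mul_of_nonneg_left hvol (sq_nonneg _))
  have hX : 0 ≤ αm ^ ((3 : ℝ)/2) * αn ^ 2 / (d - αm) ^ 2 * M := by positivity
  calc _ ≤ CC * M * αn ^ 2 / (d - αm) ^ 2 * αm ^ (3 / 2 : ℝ) * V ^ (1 / 2 : ℝ) :=
        rpow_half_le_of_le_sq_mul_cube_mul (integral_nonneg fun _ => by positivity)
          (by positivity) hαm.le measureReal_nonneg hL2
    _ = CC * V ^ (1 / 2 : ℝ) * (αm ^ ((3 : ℝ)/2) * αn ^ 2 / (d - αm) ^ 2 * M) := by ring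
    _ ≤ (CC * V ^ (1 / 2 : ℝ) + 1) * (αm ^ ((3 : ℝ)/2) * αn ^ 2 / (d - αm) ^ 2 * M) :=
        mul_le_mul_of_nonneg_right (le_add_of_nonneg_right zero_le_one) hX
    _ = _ := by ring
end

section
/- Let f : (0,∞) → ℝ be given by a finite sum f(ω) = Σₙ cₙ ωτₙ/(1 + ω²τₙ²) with cₙ > 0 and distinct τₙ > 0 (a simple rational model for the imaginary part of an MPT eigenvalue of an object with N conductive regions). Then f is smooth, positive, tends to 0 as ω → 0⁺ and as ω → ∞, and has at least one and at most 2N−1 critical points; in particular it has at most N local maxima. -/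
open Real Filter Polynomial


lemma auxDeriv {N : ℕ} (c τ : Fin N → ℝ) (x : ℝ) :
    HasDerivAt (fun ω : ℝ => ∑ n, c n * ω * τ n / (1 + ω ^ 2 * τ n ^ 2))
      (∑ n, c n * τ n * (1 - x ^ 2 * τ n ^ 2) / (1 + x ^ 2 * τ n ^ 2) ^ 2) x := by
  apply HasDerivAt.fun_sum
  intro n _
  have hb : (1 : ℝ) + x ^ 2 * τ n ^ 2 ≠ 0 := by positivity
  have hu : HasDerivAt (fun ω : ℝ => c n * ω * τ n) (c n * τ n) x := by
    simpa using ((hasDerivAt_id x).const_mul (c n)).mul_const (τ n)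
  have hv : HasDerivAt (fun ω : ℝ => 1 + ω ^ 2 * τ n ^ 2) (2 * x * τ n ^ 2) x := by
    have := ((hasDerivAt_pow 2 x).mul_const (τ n ^ 2)).const_add (1:ℝ)
    simpa [mul_comm, mul_assoc] using this
  have h := hu.fun_div hv hb
  convert h using 1
  congr 1
  ring

lemma auxSmooth {N : ℕ} (c τ : Fin N → ℝ) :
    ContDiff ℝ (⊤ : ℕ∞) (fun ω : ℝ => ∑ n, c n * ω * τ n / (1 + ω ^ 2 * τ n ^ 2)) := by
  apply ContDiff.sum
  intro n _
  apply ContDiff.div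
  · fun_prop
  · fun_prop
  · intro x; positivity

lemma auxPos {N : ℕ} (hN : 0 < N) (c τ : Fin N → ℝ) (hc : ∀ n, 0 < c n) (hτ : ∀ n, 0 < τ n)
    (ω : ℝ) (hω : 0 < ω) :
    0 < ∑ n, c n * ω * τ n / (1 + ω ^ 2 * τ n ^ 2) := by
  apply Finset.sum_pos
  · intro n _
    have := hc n; have := hτ n
    positivity
  · exact Finset.univ_nonempty_iff.mpr (Fin.pos_iff_nonempty.mp hN)

lemma auxTendstoTop {N : ℕ} (c τ : Fin N → ℝ) (hc : ∀ n, 0 < c n) (hτ : ∀ n, 0 < τ n) :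
    Tendsto (fun ω : ℝ => ∑ n, c n * ω * τ n / (1 + ω ^ 2 * τ n ^ 2)) atTop (nhds 0) := by
  have h0 : Tendsto (fun ω : ℝ => ∑ n : Fin N, c n / τ n * ω⁻¹) atTop (nhds 0) := by
    have : Tendsto (fun ω : ℝ => ∑ n : Fin N, c n / τ n * ω⁻¹) atTop
        (nhds (∑ n : Fin N, c n / τ n * 0)) := by
      apply tendsto_finset_sum
      intro n _
      exact tendsto_inv_atTop_zero.const_mul _
    simpa using this
  apply tendsto_of_tendsto_of_tendsto_of_le_of_le' tendsto_const_nhds h0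
  · filter_upwards [eventually_gt_atTop (0:ℝ)] with ω hω
    apply Finset.sum_nonneg
    intro n _
    have := (hc n).le; have := (hτ n).le
    positivity
  · filter_upwards [eventually_gt_atTop (0:ℝ)] with ω hω
    apply Finset.sum_le_sum
    intro n _
    have hcn := hc n; have hτn := hτ n
    rw [div_le_iff₀ (by positivity)]
    have h1 : c n / τ n * ω⁻¹ * (1 + ω ^ 2 * τ n ^ 2) = c n / (τ n * ω) + c n * ω * τ n := by
      field_simp
    rw [h1]
    have h2 : 0 ≤ c n / (τ n * ω) := by positivity
    linarith

noncomputable def Qp {N : ℕ} (c τ : Fin N → ℝ) : Polynomial ℝ :=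
  ∑ n, Polynomial.C (c n * τ n) * (1 - Polynomial.C (τ n ^ 2) * Polynomial.X) *
    ∏ m ∈ Finset.univ.erase n, (1 + Polynomial.C (τ m ^ 2) * Polynomial.X) ^ 2

lemma Qp_eval {N : ℕ} (c τ : Fin N → ℝ) (x : ℝ) :
    (Qp c τ).eval x = ∑ n, c n * τ n * (1 - τ n ^ 2 * x) *
      ∏ m ∈ Finset.univ.erase n, (1 + τ m ^ 2 * x) ^ 2 := by
  simp only [Qp, eval_finset_sum, eval_mul, eval_prod, eval_pow, eval_add, eval_sub, eval_one,
    eval_C, eval_X]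

lemma Qp_natDegree {N : ℕ} (hN : 0 < N) (c τ : Fin N → ℝ) :
    (Qp c τ).natDegree ≤ 2 * N - 1 := by
  apply Polynomial.natDegree_sum_le_of_forall_le
  intro n _
  refine le_trans Polynomial.natDegree_mul_le ?_
  have h0 : ∀ a : ℝ, (Polynomial.C a * Polynomial.X).natDegree ≤ 1 := fun a =>
    le_trans (Polynomial.natDegree_C_mul_le _ _) Polynomial.natDegree_X_le
  have h1 : (Polynomial.C (c n * τ n) * (1 - Polynomial.C (τ n ^ 2) * Polynomial.X)).natDegree ≤ 1 := by
    refine le_trans (Polynomial.natDegree_C_mul_le _ _) ?_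
    refine le_trans (Polynomial.natDegree_sub_le _ _) ?_
    exact max_le (by simp) (h0 _)
  have h2 : (∏ m ∈ Finset.univ.erase n, (1 + Polynomial.C (τ m ^ 2) * Polynomial.X) ^ 2).natDegree
      ≤ 2 * (N - 1) := by
    refine le_trans (Polynomial.natDegree_prod_le _ _) ?_
    have hb : ∀ m ∈ Finset.univ.erase n,
        ((1 + Polynomial.C (τ m ^ 2) * Polynomial.X) ^ 2).natDegree ≤ 2 := by
      intro m _
      refine le_trans Polynomial.natDegree_pow_le ?_
      have : (1 + Polynomial.C (τ m ^ 2) * Polynomial.X).natDegree ≤ 1 := by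
        refine le_trans (Polynomial.natDegree_add_le _ _) ?_
        exact max_le (by simp) (h0 _)
      omega
    refine le_trans (Finset.sum_le_sum hb) ?_
    rw [Finset.sum_const, Finset.card_erase_of_mem (Finset.mem_univ n), Finset.card_univ,
      Fintype.card_fin, smul_eq_mul]
    omega
  omega

lemma Qp_ne_zero {N : ℕ} (hN : 0 < N) (c τ : Fin N → ℝ)
    (hc : ∀ n, 0 < c n) (hτ : ∀ n, 0 < τ n) (hτinj : Function.Injective τ) :
    Qp c τ ≠ 0 := by
  set n₀ : Fin N := ⟨0, hN⟩
  intro h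
  have he : (Qp c τ).eval (-(τ n₀ ^ 2)⁻¹) = 0 := by rw [h]; simp
  rw [Qp_eval] at he
  rw [Finset.sum_eq_single n₀] at he
  · have hpos : 0 < c n₀ * τ n₀ * (1 - τ n₀ ^ 2 * -(τ n₀ ^ 2)⁻¹) *
        ∏ m ∈ Finset.univ.erase n₀, (1 + τ m ^ 2 * -(τ n₀ ^ 2)⁻¹) ^ 2 := by
      apply mul_pos
      · have h2 : (1 : ℝ) - τ n₀ ^ 2 * -(τ n₀ ^ 2)⁻¹ = 2 := by
          rw [mul_neg, mul_inv_cancel₀ (pow_pos (hτ n₀) 2).ne']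
          norm_num
        rw [h2]
        exact mul_pos (mul_pos (hc n₀) (hτ n₀)) two_pos
      · apply Finset.prod_pos
        intro m hm
        have hmn : m ≠ n₀ := (Finset.mem_erase.mp hm).1
        have : 1 + τ m ^ 2 * -(τ n₀ ^ 2)⁻¹ ≠ 0 := by
          intro h0
          have hne : (τ n₀ : ℝ) ^ 2 ≠ 0 := (pow_pos (hτ n₀) 2).ne'
          have hq : (τ m - τ n₀) * (τ m + τ n₀) = 0 := by
            field_simp at h0
            have h1 : τ m ^ 2 / τ n₀ ^ 2 = 1 := by linarith
            rw [div_eq_one_iff_eq hne] at h1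
            linear_combination h1
          rcases mul_eq_zero.mp hq with h' | h'
          · exact hmn (hτinj (by linarith [sub_eq_zero.mp h']))
          · nlinarith [hτ m, hτ n₀]
        positivity
    rw [he] at hpos
    exact lt_irrefl 0 hpos
  · intro m _ hm
    apply mul_eq_zero_of_right
    apply Finset.prod_eq_zero (Finset.mem_erase.mpr ⟨Ne.symm hm, Finset.mem_univ n₀⟩)
    rw [mul_neg, mul_inv_cancel₀ (pow_pos (hτ n₀) 2).ne']
    norm_num
  · intro h; exact absurd (Finset.mem_univ n₀) h

lemma auxCrit {N : ℕ} (hN : 0 < N) (c τ : Fin N → ℝ)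
    (hc : ∀ n, 0 < c n) (hτ : ∀ n, 0 < τ n) (hτinj : Function.Injective τ) :
    ∃ S : Finset ℝ,
      {ω : ℝ | 0 < ω ∧ ∑ n, c n * τ n * (1 - ω ^ 2 * τ n ^ 2) / (1 + ω ^ 2 * τ n ^ 2) ^ 2 = 0}
        ⊆ ↑S ∧ S.card ≤ 2 * N - 1 := by
  classical
  refine ⟨(Qp c τ).roots.toFinset.image Real.sqrt, ?_, ?_⟩
  · rintro ω ⟨hω, hsum⟩
    have key : (Qp c τ).eval (ω ^ 2) =
        (∑ n, c n * τ n * (1 - ω ^ 2 * τ n ^ 2) / (1 + ω ^ 2 * τ n ^ 2) ^ 2) *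
          ∏ m, (1 + ω ^ 2 * τ m ^ 2) ^ 2 := by
      rw [Qp_eval, Finset.sum_mul]
      apply Finset.sum_congr rfl
      intro n _
      have hcomm : (∏ m ∈ Finset.univ.erase n, (1 + τ m ^ 2 * ω ^ 2) ^ 2)
          = ∏ m ∈ Finset.univ.erase n, (1 + ω ^ 2 * τ m ^ 2) ^ 2 :=
        Finset.prod_congr rfl (fun m _ => by ring)
      have hprod : (∏ m, (1 + ω ^ 2 * τ m ^ 2) ^ 2) =
          (1 + ω ^ 2 * τ n ^ 2) ^ 2 * ∏ m ∈ Finset.univ.erase n, (1 + ω ^ 2 * τ m ^ 2) ^ 2 :=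
        (Finset.mul_prod_erase _ _ (Finset.mem_univ n)).symm
      rw [hcomm, hprod]
      have hb : ((1 : ℝ) + ω ^ 2 * τ n ^ 2) ^ 2 ≠ 0 := by positivity
      field_simp
    have hroot : ω ^ 2 ∈ (Qp c τ).roots := by
      rw [Polynomial.mem_roots (Qp_ne_zero hN c τ hc hτ hτinj)]
      rw [Polynomial.IsRoot, key, hsum, zero_mul]
    have : ω ^ 2 ∈ (Qp c τ).roots.toFinset := Multiset.mem_toFinset.mpr hroot
    have hmem : ω ∈ ((Qp c τ).roots.toFinset.image Real.sqrt) :=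
      Finset.mem_image.mpr ⟨ω ^ 2, this, Real.sqrt_sq hω.le⟩
    exact hmem
  · refine le_trans Finset.card_image_le ?_
    refine le_trans (Multiset.toFinset_card_le _) ?_
    refine le_trans (Polynomial.card_roots' _) (Qp_natDegree hN c τ)

lemma auxBetween (f : ℝ → ℝ) (hcont : Continuous f) (t t' : ℝ)
    (ht : IsLocalMax f t) (ht' : IsLocalMax f t') (h0 : 0 < t) (hlt : t < t')
    (hno : ∀ u, 0 < u → IsLocalMax f u → ¬(t < u ∧ u < t')) :
    ∃ y, 0 < y ∧ deriv f y = 0 ∧ ¬ IsLocalMax f y ∧ t < y ∧ y < t' := by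
  obtain ⟨y, hy, hmin⟩ := (isCompact_Icc (a := t) (b := t')).exists_isMinOn
    (Set.nonempty_Icc.mpr hlt.le) (hcont.continuousOn)
  rcases eq_or_lt_of_le hy.1 with h1 | h1
  · -- y = t : contradiction
    exfalso
    obtain ⟨ε, hε, hball⟩ := Metric.eventually_nhds_iff.mp ht
    set z := t + min ε (t' - t) / 2 with hz
    have hzpos : t < z := by
      have : 0 < min ε (t' - t) := lt_min hε (by linarith)
      simp only [hz]; linarith
    have hzlt : z < t' := by
      have h3 : min ε (t' - t) ≤ t' - t := min_le_right _ _
      have : 0 < min ε (t' - t) := lt_min hε (by linarith)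
      simp only [hz]; linarith
    have hzball : dist z t < ε := by
      rw [Real.dist_eq]
      have h3 : min ε (t' - t) ≤ ε := min_le_left _ _
      have h4 : 0 < min ε (t' - t) := lt_min hε (by linarith)
      rw [abs_of_pos (by simp only [hz]; linarith)]
      simp only [hz]; linarith
    have hfz : f z = f t := by
      refine le_antisymm (hball hzball) ?_
      have : f y ≤ f z := hmin (Set.mem_Icc.mpr ⟨hzpos.le, hzlt.le⟩)
      rwa [← h1] at this
    have hzmax : IsLocalMax f z := by
      have hopen : Metric.ball t ε ∈ nhds z :=
        Metric.isOpen_ball.mem_nhds (by rwa [Metric.mem_ball])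
      filter_upwards [hopen] with w hw
      rw [hfz]
      exact hball (Metric.mem_ball.mp hw)
    exact hno z (lt_trans h0 hzpos) hzmax ⟨hzpos, hzlt⟩
  · rcases eq_or_lt_of_le hy.2 with h2 | h2
    · -- y = t' : contradiction
      exfalso
      obtain ⟨ε, hε, hball⟩ := Metric.eventually_nhds_iff.mp ht'
      set z := t' - min ε (t' - t) / 2 with hz
      have hδ : 0 < min ε (t' - t) := lt_min hε (by linarith)
      have hzpos : t < z := by
        have h3 : min ε (t' - t) ≤ t' - t := min_le_right _ _
        simp only [hz]; linarith
      have hzlt : z < t' := by simp only [hz]; linarith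
      have hzball : dist z t' < ε := by
        rw [Real.dist_eq]
        have h3 : min ε (t' - t) ≤ ε := min_le_left _ _
        rw [abs_of_neg (by simp only [hz]; linarith)]
        simp only [hz]; linarith
      have hfz : f z = f t' := by
        refine le_antisymm (hball hzball) ?_
        have : f y ≤ f z := hmin (Set.mem_Icc.mpr ⟨hzpos.le, hzlt.le⟩)
        rwa [h2] at this
      have hzmax : IsLocalMax f z := by
        have hopen : Metric.ball t' ε ∈ nhds z :=
          Metric.isOpen_ball.mem_nhds (by rwa [Metric.mem_ball])
        filter_upwards [hopen] with w hw
        rw [hfz]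
        exact hball (Metric.mem_ball.mp hw)
      exact hno z (lt_trans h0 hzpos) hzmax ⟨hzpos, hzlt⟩
    · -- interior
      have hlocmin : IsLocalMin f y := hmin.isLocalMin (Icc_mem_nhds h1 h2)
      refine ⟨y, lt_trans h0 h1, hlocmin.deriv_eq_zero, ?_, h1, h2⟩
      intro hmax
      exact hno y (lt_trans h0 h1) hmax ⟨h1, h2⟩

lemma auxCount (S T : Finset ℝ) (hTS : T ⊆ S)
    (hbet : ∀ t ∈ T, ∀ t' ∈ T, t < t' → (∀ u ∈ T, ¬(t < u ∧ u < t')) →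
      ∃ y, y ∈ S ∧ y ∉ T ∧ t < y ∧ y < t') :
    2 * T.card ≤ S.card + 1 := by
  classical
  rcases Nat.eq_zero_or_pos T.card with h0 | hpos
  · omega
  set l := T.sort (· ≤ ·) with hl
  have hlen : l.length = T.card := T.length_sort _
  have hsorted : l.SortedLT := T.sortedLT_sort
  have hmono : StrictMono l.get := hsorted
  have hmem : ∀ x, x ∈ l ↔ x ∈ T := fun x => T.mem_sort _
  have H : ∀ i : Fin (T.card - 1), ∃ y, y ∈ S ∧ y ∉ T ∧
      l.get ⟨i.1, by have := i.isLt; omega⟩ < y ∧ y < l.get ⟨i.1 + 1, by have := i.isLt; omega⟩ := by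
    intro i
    have hia : l.get ⟨i.1, by have := i.isLt; omega⟩ ∈ T := (hmem _).mp (l.get_mem _)
    have hib : l.get ⟨i.1 + 1, by have := i.isLt; omega⟩ ∈ T := (hmem _).mp (l.get_mem _)
    have hab : l.get ⟨i.1, by have := i.isLt; omega⟩ < l.get ⟨i.1 + 1, by have := i.isLt; omega⟩ :=
      hmono (by simp [Fin.mk_lt_mk])
    refine hbet _ hia _ hib hab ?_
    intro u hu ⟨h1, h2⟩
    obtain ⟨j, hj⟩ := List.mem_iff_get.mp ((hmem u).mpr hu)
    rw [← hj] at h1 h2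
    have hj1 : (⟨i.1, by have := i.isLt; omega⟩ : Fin l.length) < j := hmono.lt_iff_lt.mp h1
    have hj2 : j < (⟨i.1 + 1, by have := i.isLt; omega⟩ : Fin l.length) := hmono.lt_iff_lt.mp h2
    rw [Fin.lt_def] at hj1 hj2
    simp at hj1 hj2
    omega
  choose y hyS hyT hy1 hy2 using H
  have hymono : StrictMono y := by
    intro i j hij
    have h1 : y i < l.get ⟨i.1 + 1, by have := i.isLt; omega⟩ := hy2 i
    have h2 : l.get ⟨j.1, by have := j.isLt; omega⟩ < y j := hy1 j
    have h3 : l.get ⟨i.1 + 1, by have := i.isLt; omega⟩ ≤ l.get ⟨j.1, by have := j.isLt; omega⟩ :=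
      hmono.monotone (by rw [Fin.mk_le_mk]; exact hij)
    linarith
  set Y : Finset ℝ := Finset.image y Finset.univ with hY
  have hcardY : Y.card = T.card - 1 := by
    rw [hY, Finset.card_image_of_injective _ hymono.injective, Finset.card_univ,
      Fintype.card_fin]
  have hdisj : Disjoint T Y := by
    rw [Finset.disjoint_left]
    intro x hxT hxY
    obtain ⟨i, _, hi⟩ := Finset.mem_image.mp hxY
    exact hyT i (hi ▸ hxT)
  have hsub : T ∪ Y ⊆ S := by
    apply Finset.union_subset hTS
    intro x hxY
    obtain ⟨i, _, hi⟩ := Finset.mem_image.mp hxY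
    exact hi ▸ hyS i
  have := Finset.card_le_card hsub
  rw [Finset.card_union_of_disjoint hdisj, hcardY] at this
  omega

/-- For `f(ω) = Σₙ cₙ ωτₙ/(1 + ω²τₙ²)` with `cₙ > 0` and distinct `τₙ > 0`, `f` is smooth on
`(0,∞)`, positive there, tends to `0` as `ω → 0⁺` and as `ω → ∞`, has at least one and at most
`2N−1` critical points in `(0,∞)`, and at most `N` local maxima in `(0,∞)`. -/
theorem stmt19 (N : ℕ) (hN : 0 < N) (c τ : Fin N → ℝ)
    (hc : ∀ n, 0 < c n) (hτ : ∀ n, 0 < τ n) (hτinj : Function.Injective τ)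
    (f : ℝ → ℝ) (hf : ∀ ω, f ω = ∑ n, c n * ω * τ n / (1 + ω ^ 2 * τ n ^ 2)) :
    ContDiffOn ℝ (⊤ : ℕ∞) f (Set.Ioi 0) ∧
    (∀ ω > (0 : ℝ), 0 < f ω) ∧
    Tendsto f (nhdsWithin 0 (Set.Ioi 0)) (nhds 0) ∧
    Tendsto f atTop (nhds 0) ∧
    (∃ ω > (0 : ℝ), deriv f ω = 0) ∧
    (∃ S : Finset ℝ, {ω : ℝ | 0 < ω ∧ deriv f ω = 0} ⊆ ↑S ∧ S.card ≤ 2 * N - 1) ∧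
    (∃ T : Finset ℝ, {ω : ℝ | 0 < ω ∧ IsLocalMax f ω} ⊆ ↑T ∧ T.card ≤ N) := by
  classical
  have hfe : f = fun ω => ∑ n, c n * ω * τ n / (1 + ω ^ 2 * τ n ^ 2) := funext hf
  subst hfe
  set F : ℝ → ℝ := fun ω => ∑ n, c n * ω * τ n / (1 + ω ^ 2 * τ n ^ 2) with hF
  have hsmooth : ContDiff ℝ (⊤ : ℕ∞) F := auxSmooth c τ
  have hcont : Continuous F := hsmooth.continuous
  have hpos : ∀ ω > (0:ℝ), 0 < F ω := fun ω hω => auxPos hN c τ hc hτ ω hω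
  have hder : ∀ x : ℝ, deriv F x =
      ∑ n, c n * τ n * (1 - x ^ 2 * τ n ^ 2) / (1 + x ^ 2 * τ n ^ 2) ^ 2 :=
    fun x => (auxDeriv c τ x).deriv
  have hF0 : F 0 = 0 := by simp [hF]
  have h3 : Tendsto F (nhdsWithin 0 (Set.Ioi 0)) (nhds 0) := by
    have := (hcont.tendsto 0).mono_left (nhdsWithin_le_nhds (s := Set.Ioi (0:ℝ)))
    rwa [hF0] at this
  have h4 : Tendsto F atTop (nhds 0) := auxTendstoTop c τ hc hτ
  -- part 6 : critical points bound
  obtain ⟨S, hSsub, hScard⟩ := auxCrit hN c τ hc hτ hτinj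
  have hSsub' : {ω : ℝ | 0 < ω ∧ deriv F ω = 0} ⊆ ↑S := by
    intro ω ⟨hω, hd⟩
    exact hSsub ⟨hω, by rw [← hder]; exact hd⟩
  -- part 5 : existence of a critical point
  have h5 : ∃ ω > (0:ℝ), deriv F ω = 0 := by
    have hf1 : 0 < F 1 := hpos 1 one_pos
    have ha : ∃ a : ℝ, (0 < a ∧ a < 1) ∧ F a < F 1 := by
      have e1 : ∀ᶠ x in nhdsWithin 0 (Set.Ioi 0), F x < F 1 := h3.eventually_lt_const hf1
      have e2 : ∀ᶠ x : ℝ in nhdsWithin 0 (Set.Ioi 0), 0 < x ∧ x < 1 := by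
        have : ∀ᶠ x : ℝ in nhdsWithin 0 (Set.Ioi 0), x < 1 :=
          eventually_nhdsWithin_of_eventually_nhds (tendsto_id.eventually_lt_const zero_lt_one)
        filter_upwards [this, self_mem_nhdsWithin] with x h1 h2
        exact ⟨h2, h1⟩
      obtain ⟨a, h1, h2⟩ := (e2.and e1).exists
      exact ⟨a, h1, h2⟩
    have hb : ∃ b : ℝ, 1 < b ∧ F b < F 1 := by
      obtain ⟨b, h1, h2⟩ := ((eventually_gt_atTop (1:ℝ)).and (h4.eventually_lt_const hf1)).exists
      exact ⟨b, h1, h2⟩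
    obtain ⟨a, ⟨ha0, ha1⟩, haf⟩ := ha
    obtain ⟨b, hb1, hbf⟩ := hb
    have hab : a < b := lt_trans ha1 hb1
    obtain ⟨x, hx, hmax⟩ := (isCompact_Icc (a := a) (b := b)).exists_isMaxOn
      (Set.nonempty_Icc.mpr hab.le) hcont.continuousOn
    have h1mem : (1:ℝ) ∈ Set.Icc a b := Set.mem_Icc.mpr ⟨ha1.le, hb1.le⟩
    have hfx : F 1 ≤ F x := hmax h1mem
    have hxa : a < x := by
      rcases eq_or_lt_of_le hx.1 with h | h
      · exfalso; rw [h] at haf; linarith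
      · exact h
    have hxb : x < b := by
      rcases eq_or_lt_of_le hx.2 with h | h
      · exfalso; rw [← h] at hbf; linarith
      · exact h
    have : IsLocalMax F x := hmax.isLocalMax (Icc_mem_nhds hxa hxb)
    exact ⟨x, lt_trans ha0 hxa, this.deriv_eq_zero⟩
  -- part 7 : local maxima bound
  have h7 : ∃ T : Finset ℝ, {ω : ℝ | 0 < ω ∧ IsLocalMax F ω} ⊆ ↑T ∧ T.card ≤ N := by
    set T : Finset ℝ := S.filter (fun x => 0 < x ∧ IsLocalMax F x) with hT
    have hmemT : ∀ ω : ℝ, 0 < ω → IsLocalMax F ω → ω ∈ T := by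
      intro ω hω hmax
      have hS : ω ∈ S := hSsub' ⟨hω, hmax.deriv_eq_zero⟩
      exact Finset.mem_filter.mpr ⟨hS, hω, hmax⟩
    have hTsub : {ω : ℝ | 0 < ω ∧ IsLocalMax F ω} ⊆ ↑T := fun ω ⟨h1, h2⟩ => hmemT ω h1 h2
    refine ⟨T, hTsub, ?_⟩
    have hcount : 2 * T.card ≤ S.card + 1 := by
      apply auxCount S T (Finset.filter_subset _ _)
      intro t htT t' ht'T hlt hno
      obtain ⟨-, ht0, htmax⟩ := Finset.mem_filter.mp htT
      obtain ⟨-, ht'0, ht'max⟩ := Finset.mem_filter.mp ht'T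
      obtain ⟨y, hy0, hyd, hynmax, hy1, hy2⟩ := auxBetween F hcont t t' htmax ht'max ht0 hlt
        (fun u hu humax hbtw => hno u (hmemT u hu humax) hbtw)
      refine ⟨y, hSsub' ⟨hy0, hyd⟩, ?_, hy1, hy2⟩
      intro hyT
      exact hynmax (Finset.mem_filter.mp hyT).2.2
    omega
  exact ⟨hsmooth.contDiffOn, hpos, h3, h4, h5, ⟨S, hSsub', hScard⟩, h7⟩
end
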